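/- There exists a primitive isometric embedding j of T := U(2) ⊕ D₄(−1) into L := U^{⊕3} ⊕ E₈(−1)^{⊕2} ⊕ ⟨−2⟩ such that every primitive vector v of the image j(T) has divisibility 1 in L, i.e. the ideal {⟨v,w⟩ : w ∈ L} ⊆ ℤ equals ℤ. -/

import Mathlib

/-!
The image of `U(2)` is spanned by `e₁ + e₂` and `f₁ + f₂` in `U ⊕ U`, and that of `D₄(-1)` by the
simple roots `α₂, α₄, α₃, α₅` of the first `E₈(-1)` (Bourbaki labelling, `α₄` the branch node).
Each basis vector `bᵢ` of the image has a partner `rᵢ ∈ L` with `⟨bᵢ, rⱼ⟩ = δᵢⱼ`: `f₁` and `e₁` for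
the `U(2)` part, and minus the fundamental weights `ω₂, ω₄, ω₃, ω₅` (which lie in `E₈`, since `E₈` is
unimodular) for the `D₄` part. Hence `w ↦ (⟨bᵢ, w⟩)ᵢ` maps `L` onto `ℤ⁶`. This surjection makes the
image primitive, and since a primitive `t ∈ ℤ⁶` has `t ⬝ s = 1` for some `s` (Bézout), the vector
`∑ sᵢ rᵢ` pairs to `1` with `∑ tᵢ bᵢ`.
-/

open Matrix

/-- The bilinear form of the lattice `ℤⁿ` with Gram matrix `G`. -/
def bform {n : ℕ} (G : Matrix (Fin n) (Fin n) ℤ) (v w : Fin n → ℤ) : ℤ :=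
  v ⬝ᵥ G.mulVec w

/-- Gram matrix of the hyperbolic plane `U`. -/
def UMat : Matrix (Fin 2) (Fin 2) ℤ := !![0, 1; 1, 0]

/-- Gram matrix of the root lattice `E₈` (the `E₈` Cartan matrix). -/
def E8Mat : Matrix (Fin 8) (Fin 8) ℤ := CartanMatrix.E₈

/-- Gram matrix of the root lattice `D₄` (the `D₄` Cartan matrix). -/
def D4Mat : Matrix (Fin 4) (Fin 4) ℤ :=
  !![ 2, -1,  0,  0;
     -1,  2, -1, -1;
      0, -1,  2,  0;
      0, -1,  0,  2]

/-- Orthogonal direct sum of two Gram matrices. -/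
def dsum {m n : ℕ} (G : Matrix (Fin m) (Fin m) ℤ) (H : Matrix (Fin n) (Fin n) ℤ) :
    Matrix (Fin (m + n)) (Fin (m + n)) ℤ :=
  Matrix.reindex finSumFinEquiv finSumFinEquiv (Matrix.fromBlocks G 0 0 H)

/-- Gram matrix of `L = U³ ⊕ E₈(-1)² ⊕ ⟨-2⟩`, the Beauville–Bogomolov–Fujiki
lattice of manifolds of `K3^[2]`-type. -/
def LMat : Matrix (Fin 23) (Fin 23) ℤ :=
  dsum (dsum (dsum UMat (dsum UMat UMat)) (dsum (-E8Mat) (-E8Mat))) !![-2]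

/-- Gram matrix of `U(2) ⊕ E₈(-2)`. -/
def T1Mat : Matrix (Fin 10) (Fin 10) ℤ := dsum ((2 : ℤ) • UMat) ((-2 : ℤ) • E8Mat)

/-- Gram matrix of `U ⊕ E₈(-2)`. -/
def T2Mat : Matrix (Fin 10) (Fin 10) ℤ := dsum UMat ((-2 : ℤ) • E8Mat)

/-- Gram matrix of `U(2) ⊕ D₄(-1)`. -/
def T3Mat : Matrix (Fin 6) (Fin 6) ℤ := dsum ((2 : ℤ) • UMat) (-D4Mat)

/-- `F` (viewed as the linear map `v ↦ F *ᵥ v` from `ℤᵐ` to `ℤᴺ`) is a primitive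
isometric embedding of the lattice with Gram matrix `G` into the lattice with
Gram matrix `H`: it is injective, preserves the bilinear forms, and its image is
a primitive sublattice (the quotient by the image is torsion-free). -/
def IsPrimitiveIsometricEmb {m N : ℕ} (G : Matrix (Fin m) (Fin m) ℤ)
    (H : Matrix (Fin N) (Fin N) ℤ) (F : Matrix (Fin N) (Fin m) ℤ) : Prop :=
  Function.Injective F.mulVec ∧
  (∀ v w : Fin m → ℤ, bform H (F *ᵥ v) (F *ᵥ w) = bform G v w) ∧
  (∀ (x : Fin N → ℤ) (c : ℤ), c ≠ 0 → (∃ v, c • x = F *ᵥ v) → ∃ v, x = F *ᵥ v)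

section LeftInverse

variable {R m n : Type*} [CommRing R] [Fintype m] [Fintype n] [DecidableEq m]
  {P : Matrix m n R} {F : Matrix n m R}

theorem Matrix.leftInverse_mulVec_of_mul_eq_one (hPF : P * F = 1) :
    Function.LeftInverse P.mulVec F.mulVec := fun v => by
  rw [mulVec_mulVec, hPF, one_mulVec]

theorem Matrix.eq_mulVec_of_smul_eq_mulVec [IsDomain R] (hPF : P * F = 1) {c : R} (hc : c ≠ 0)
    {x : n → R} {v : m → R} (hx : c • x = F *ᵥ v) : x = F *ᵥ (P *ᵥ x) := by
  have hv : c • (P *ᵥ x) = v := by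
    rw [← mulVec_smul, hx, leftInverse_mulVec_of_mul_eq_one hPF v]
  refine smul_right_injective (n → R) hc ?_
  simp only [hx, ← hv, mulVec_smul]

end LeftInverse

theorem exists_dotProduct_eq_one {R ι : Type*} [CommRing R] [IsPrincipalIdealRing R] [Fintype ι]
    (t : ι → R) (ht : ∀ (c : R) (t' : ι → R), t = c • t' → IsUnit c) :
    ∃ s : ι → R, t ⬝ᵥ s = 1 := by
  obtain ⟨g, hg⟩ := IsPrincipalIdealRing.principal (Ideal.span (Set.range t))
  have hdvd : ∀ i, g ∣ t i := fun i => by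
    rw [← Ideal.mem_span_singleton, ← Ideal.submodule_span_eq, ← hg]
    exact Ideal.subset_span ⟨i, rfl⟩
  choose t' ht' using hdvd
  have hg_unit : IsUnit g := ht g t' (funext ht')
  have hone : (1 : R) ∈ Ideal.span (Set.range t) := by
    rw [hg, Ideal.submodule_span_eq, Ideal.span_singleton_eq_top.mpr hg_unit]
    exact Submodule.mem_top
  obtain ⟨s, hs⟩ := Ideal.mem_span_range_iff_exists_fun.mp hone
  exact ⟨s, by simpa only [dotProduct, mul_comm] using hs⟩

section Lattice

variable {m N : ℕ}

theorem bform_mulVec_mulVec (H : Matrix (Fin N) (Fin N) ℤ) (F D : Matrix (Fin N) (Fin m) ℤ)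
    (v w : Fin m → ℤ) : bform H (F *ᵥ v) (D *ᵥ w) = bform (Fᵀ * H * D) v w := by
  rw [bform, bform, ← mulVec_mulVec, ← mulVec_mulVec, mulVec_transpose, dotProduct_comm,
    dotProduct_mulVec, dotProduct_comm]

variable {H : Matrix (Fin N) (Fin N) ℤ} {F D : Matrix (Fin N) (Fin m) ℤ}

theorem isPrimitiveIsometricEmb_of_mul_eq_one {G : Matrix (Fin m) (Fin m) ℤ}
    (hG : Fᵀ * H * F = G) (hD : Fᵀ * H * D = 1) : IsPrimitiveIsometricEmb G H F := by
  have hPF : Dᵀ * Hᵀ * F = 1 := by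
    simpa only [transpose_mul, transpose_transpose, transpose_one, Matrix.mul_assoc] using
      congrArg transpose hD
  exact ⟨(leftInverse_mulVec_of_mul_eq_one hPF).injective,
    fun v w => by rw [bform_mulVec_mulVec, hG],
    fun x c hc ⟨v, hv⟩ => ⟨_, eq_mulVec_of_smul_eq_mulVec hPF hc hv⟩⟩

theorem exists_bform_mulVec_eq_one (hD : Fᵀ * H * D = 1) {t : Fin m → ℤ}
    (ht : ∀ (c : ℤ) (t' : Fin m → ℤ), t = c • t' → IsUnit c) :
    ∃ w : Fin N → ℤ, bform H (F *ᵥ t) w = 1 := by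
  obtain ⟨s, hs⟩ := exists_dotProduct_eq_one t ht
  exact ⟨D *ᵥ s, by rw [bform_mulVec_mulVec, hD, bform, one_mulVec, hs]⟩

end Lattice

def u2d4Emb : Matrix (Fin 23) (Fin 6) ℤ :=
  (!![1, 0, 1, 0, 0, 0, 0, 0, 0, 0, 0, 0, 0, 0, 0, 0, 0, 0, 0, 0, 0, 0, 0;
      0, 1, 0, 1, 0, 0, 0, 0, 0, 0, 0, 0, 0, 0, 0, 0, 0, 0, 0, 0, 0, 0, 0;
      0, 0, 0, 0, 0, 0, 0, 1, 0, 0, 0, 0, 0, 0, 0, 0, 0, 0, 0, 0, 0, 0, 0;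
      0, 0, 0, 0, 0, 0, 0, 0, 0, 1, 0, 0, 0, 0, 0, 0, 0, 0, 0, 0, 0, 0, 0;
      0, 0, 0, 0, 0, 0, 0, 0, 1, 0, 0, 0, 0, 0, 0, 0, 0, 0, 0, 0, 0, 0, 0;
      0, 0, 0, 0, 0, 0, 0, 0, 0, 0, 1, 0, 0, 0, 0, 0, 0, 0, 0, 0, 0, 0, 0] :
    Matrix (Fin 6) (Fin 23) ℤ)ᵀ

def u2d4Dual : Matrix (Fin 23) (Fin 6) ℤ :=
  (!![0, 1, 0, 0, 0, 0,   0,   0,   0,   0,   0,   0,   0,  0, 0, 0, 0, 0, 0, 0, 0, 0, 0;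
      1, 0, 0, 0, 0, 0,   0,   0,   0,   0,   0,   0,   0,  0, 0, 0, 0, 0, 0, 0, 0, 0, 0;
      0, 0, 0, 0, 0, 0,  -5,  -8, -10, -15, -12,  -9,  -6, -3, 0, 0, 0, 0, 0, 0, 0, 0, 0;
      0, 0, 0, 0, 0, 0, -10, -15, -20, -30, -24, -18, -12, -6, 0, 0, 0, 0, 0, 0, 0, 0, 0;
      0, 0, 0, 0, 0, 0,  -7, -10, -14, -20, -16, -12,  -8, -4, 0, 0, 0, 0, 0, 0, 0, 0, 0;
      0, 0, 0, 0, 0, 0,  -8, -12, -16, -24, -20, -15, -10, -5, 0, 0, 0, 0, 0, 0, 0, 0, 0] :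
    Matrix (Fin 6) (Fin 23) ℤ)ᵀ

theorem u2d4Emb_gram : u2d4Embᵀ * LMat * u2d4Emb = T3Mat := by decide

theorem u2d4Emb_mul_u2d4Dual : u2d4Embᵀ * LMat * u2d4Dual = 1 := by decide

/-- There is a primitive isometric embedding `j` of `U(2) ⊕ D₄(-1)` into
`L = U³ ⊕ E₈(-1)² ⊕ ⟨-2⟩` such that every primitive vector of the image has
divisibility `1` in `L`, i.e. the ideal of values `⟨v,w⟩`, `w ∈ L`, is all
of `ℤ`. -/
theorem exists_primitive_embedding_U2D4_div_one :
    ∃ F : Matrix (Fin 23) (Fin 6) ℤ,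
      IsPrimitiveIsometricEmb T3Mat LMat F ∧
      ∀ v : Fin 23 → ℤ, (∃ t : Fin 6 → ℤ, v = F *ᵥ t) →
        (∀ (c : ℤ) (w : Fin 23 → ℤ), v = c • w → IsUnit c) →
        ∃ w : Fin 23 → ℤ, bform LMat v w = 1 := by
  refine ⟨u2d4Emb, isPrimitiveIsometricEmb_of_mul_eq_one u2d4Emb_gram u2d4Emb_mul_u2d4Dual, ?_⟩
  rintro _ ⟨t, rfl⟩ hprim
  exact exists_bform_mulVec_eq_one u2d4Emb_mul_u2d4Dual fun c t' ht =>
    hprim c (u2d4Emb *ᵥ t') (by rw [ht, mulVec_smul])
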